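/- arXiv:math/0306153 — 5 statements merged into one kernel-verified Lean document; each statement's English description precedes it below -/
import Mathlib

section
/- Let (M,g) be a transverse Riemann-Lorentz space with tangent radical and singular hypersurface Σ. Then the main connection D̃ on Σ has torsion tensor equal to R⊗dρ, i.e. D̃_X Y − D̃_Y X − [X,Y] = dρ(X,Y)·R for all X,Y∈X(Σ). -/
/-!
Axiomatic model of a transverse Riemann-Lorentz space with tangent radical,
following Aguirre-Daban & Lafuente-Lopez, "Transverse Riemann-Lorentz metrics
with tangent radical".

`CS` models `C^inf(Sigma)`, `CM` models `C^inf(M)`, `XS` models the tangent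
vectorfields `X(Sigma)`, `XA` models the vectorfields along `Sigma` (`X_Sigma`),
`XM` models `X(M)`; `Pt` is the set of points of `Sigma` and `Tp p` models `T_p M`.
-/
structure RLData (CS CM XS XA XM : Type) [CommRing CS] [CommRing CM]
    [AddCommGroup XS] [Module CS XS] [AddCommGroup XA] [Module CS XA]
    [AddCommGroup XM] [Module CM XM] (Pt : Type) (Tp : Pt → Type) : Type where
  /-- inclusion `X(Σ) ⊆ X_Σ` -/
  iota : XS →ₗ[CS] XA
  iota_inj : Function.Injective iota
  /-- Lie bracket on `X(Σ)` -/
  bra : XS → XS → XS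
  /-- action of tangent fields on functions, `X(f)` -/
  act : XS → CS → CS
  act_add : ∀ X f g, act X (f + g) = act X f + act X g
  act_mul : ∀ X f g, act X (f * g) = act X f * g + f * act X g
  act_smul : ∀ (f : CS) X h, act (f • X) h = f * act X h
  /-- the (degenerate) metric along `Σ` -/
  gS : XA →ₗ[CS] XA →ₗ[CS] CS
  gS_symm : ∀ A B, gS A B = gS B A
  /-- the restricted dual connection `□_X A (C)` -/
  sq : XS → XA → XA →ₗ[CS] CS
  sq_smul1 : ∀ (f : CS) X A, sq (f • X) A = f • sq X A
  sq_add1 : ∀ X X' A, sq (X + X') A = sq X A + sq X' A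
  sq_add2 : ∀ X A A', sq X (A + A') = sq X A + sq X A'
  sq_leib : ∀ X (f : CS) A C, sq X (f • A) C = act X f * gS A C + f * sq X A C
  /-- torsion-free: `□_X Y(C) - □_Y X(C) = ⟨[X,Y],C⟩` -/
  sq_tor : ∀ X Y C, sq X (iota Y) C - sq Y (iota X) C = gS (iota (bra X Y)) C
  /-- metric: `□_X A(B) + □_X B(A) = X⟨A,B⟩` -/
  sq_met : ∀ X A B, sq X A B + sq X B A = act X (gS A B)
  /-- the radical is tangent -/
  rad_tan : ∀ A : XA, (∀ B, gS A B = 0) → ∃ X : XS, A = iota X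
  /-- the main normal `N` -/
  N : XA
  gN_tan : ∀ X : XS, gS N (iota X) = 0
  /-- Riemann-to-Lorentz signature change: `⟨N,N⟩ = 1` -/
  gNN : gS N N = 1
  /-- the main radical vectorfield `R` -/
  R : XS
  R_rad : ∀ A : XA, gS (iota R) A = 0
  /-- `H(R,R) = -1` -/
  HRR : sq R (iota R) N = -1
  /-- `II`, as a symmetric bilinear form on `X_Σ` -/
  II : XA →ₗ[CS] XA →ₗ[CS] CS
  II_symm : ∀ A B, II A B = II B A
  II_sq : ∀ X A, II (iota X) A = sq X A (iota R)
  II_NN : II N N = 0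
  II_NX : ∀ X : XS, II N (iota X) = -(sq X (iota R) N)
  /-- `ρ` and the screen part of the decomposition `A = ν(A)N + A^S + ρ(A)R` -/
  rho : XA →ₗ[CS] CS
  sP : XA → XS
  sP_scr : ∀ A, sq (sP A) (iota R) N = 0
  decomp : ∀ A : XA, A = gS A N • N + iota (sP A) + rho A • iota R
  decomp_unique : ∀ (a r : CS) (s : XS), sq s (iota R) N = 0 →
    a • N + iota s + r • iota R = 0 → a = 0 ∧ s = 0 ∧ r = 0
  rho_tan : ∀ X : XS, rho (iota X) = -(sq X (iota R) N)
  /-- the metric is nondegenerate on the screen distribution -/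
  scr_nondeg : ∀ s : XS, sq s (iota R) N = 0 →
    (∀ V : XS, sq V (iota R) N = 0 → gS (iota s) (iota V) = 0) → s = 0
  /-- an element `½ ∈ C^∞(Σ)` -/
  half : CS
  half_add : half + half = 1
  /-- the screen connection-operator `D^S` -/
  DS : XS → XA → XS
  DS_scr : ∀ X A, sq (DS X A) (iota R) N = 0
  DS_def : ∀ X A (V : XS), sq V (iota R) N = 0 →
    gS (iota (DS X A)) (iota V) = sq X A (iota V)
  /-- restriction of functions and of vectorfields -/
  rF : CM →+* CS
  rV : XM → XA
  rV_add : ∀ A B : XM, rV (A + B) = rV A + rV B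
  rV_smul : ∀ (f : CM) (A : XM), rV (f • A) = rF f • rV A
  /-- the metric on `M` -/
  gM : XM →ₗ[CM] XM →ₗ[CM] CM
  gM_symm : ∀ A B, gM A B = gM B A
  gM_res : ∀ A B, rF (gM A B) = gS (rV A) (rV B)
  gM_nondeg : ∀ D : XM, (∀ C, gM D C = 0) → D = 0
  /-- Lie bracket on `M` -/
  brM : XM → XM → XM
  /-- canonical extension (by the flow of the canonical geodesic extension of `N`) -/
  cext : XA → XM
  cext_res : ∀ A, rV (cext A) = A
  cext_comm : ∀ A, brM (cext N) (cext A) = 0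
  cext_unique : ∀ (A : XA) (E : XM), rV E = A → brM (cext N) E = 0 → E = cext A
  /-- `τ = ⟨ℛ,ℛ⟩`, an equation for `Σ` -/
  tau : CM
  tau_eq : tau = gM (cext (iota R)) (cext (iota R))
  tau_ideal : ∀ f : CM, rF f = 0 → ∃ k, f = k * tau
  tau_reg : ∀ k k' : CM, k * tau = k' * tau → k = k'
  /-- the dual connection on `M` -/
  sqM : XM → XM → XM →ₗ[CM] CM
  sqM_res : ∀ (X : XS) (A B C : XM), rV A = iota X →
    rF (sqM A B C) = sq X (rV B) (rV C)
  sqM_II : ∀ A B : XM, rF (sqM A B (cext (iota R))) = II (rV A) (rV B)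
  /-- `Υ` : the everywhere-regular (0,4)-tensorfield with
  `⟨R(𝒜°,ℬ°)𝒞°,𝒟°⟩ = τ⁻¹ Υ(𝒜°,ℬ°,𝒞°,𝒟°)` on `M - Σ` -/
  Ups : XM → XM → XM → XM → CM
  Ups_anti : ∀ A B C D, Ups A B C D = -Ups B A C D
  Ups_pair : ∀ A B C D, Ups A B C D = Ups C D A B
  Ups_res : ∀ A B C D, rF (Ups A B C D) =
    II (rV A) (rV C) * II (rV B) (rV D) - II (rV A) (rV D) * II (rV B) (rV C)
  /-- evaluation of vectorfields and of functions at points of `Σ` -/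
  evV : (p : Pt) → XA → Tp p
  evF : Pt → CS →+* ℝ
  evF_faithful : ∀ f : CS, (∀ p, evF p f = 0) → f = 0
  /-- the screen bundle is riemannian -/
  scr_pos : ∀ V : XS, sq V (iota R) N = 0 → ∀ p : Pt, 0 ≤ evF p (gS (iota V) (iota V))

namespace RLData

variable {CS CM XS XA XM : Type} [CommRing CS] [CommRing CM]
  [AddCommGroup XS] [Module CS XS] [AddCommGroup XA] [Module CS XA]
  [AddCommGroup XM] [Module CM XM] {Pt : Type} {Tp : Pt → Type}
  (d : RLData CS CM XS XA XM Pt Tp)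

/-- membership in the canonical screen distribution: `H(V,R) = 0` -/
def scr (V : XS) : Prop := d.sq V (d.iota d.R) d.N = 0

/-- the second fundamental form `H(X,Y) = □_X Y (N)` -/
def H (X Y : XS) : CS := d.sq X (d.iota Y) d.N

/-- `ν(A) = ⟨A,N⟩` -/
def nu (A : XA) : CS := d.gS A d.N

/-- `Σ` is `II`-flat -/
def IIflat : Prop := ∀ V W : XS, d.scr V → d.scr W → d.II (d.iota V) (d.iota W) = 0

/-- `Σ` is `H`-flat -/
def Hflat : Prop := ∀ V W : XS, d.scr V → d.scr W → d.H V W = 0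

/-- `Σ` is `III`-flat -/
def IIIflat : Prop := d.IIflat ∧ d.Hflat

/-- `dρ(X,Y)` -/
def drho (X Y : XS) : CS :=
  d.act X (d.rho (d.iota Y)) - d.act Y (d.rho (d.iota X)) - d.rho (d.iota (d.bra X Y))

/-- the main connection `D̃_X Y = D^S_X Y + X(ρ(Y))·R` -/
def Dt (X Y : XS) : XS := d.DS X (d.iota Y) + d.act X (d.rho (d.iota Y)) • d.R

/-- the main admissible connection `Ḋ_X Y = D̃_X Y - ½ dρ(X,Y)·R` -/
def Dd (X Y : XS) : XS := d.Dt X Y - (d.half * d.drho X Y) • d.R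

/-- being a (Koszul) connection on `Σ` -/
def IsConn (D : XS → XS → XS) : Prop :=
  (∀ (f : CS) X Y, D (f • X) Y = f • D X Y) ∧
  (∀ X X' Y, D (X + X') Y = D X Y + D X' Y) ∧
  (∀ X Y Y', D X (Y + Y') = D X Y + D X Y') ∧
  (∀ (f : CS) X Y, D X (f • Y) = d.act X f • Y + f • D X Y)

/-- torsion-free connection on `Σ` -/
def TorsionFree (D : XS → XS → XS) : Prop := ∀ X Y, D X Y - D Y X = d.bra X Y

/-- metric connection on `Σ` -/
def MetricConn (D : XS → XS → XS) : Prop := ∀ X Y Z,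
  d.gS (d.iota (D X Y)) (d.iota Z) + d.gS (d.iota Y) (d.iota (D X Z)) =
    d.act X (d.gS (d.iota Y) (d.iota Z))

/-- admissible connection on `Σ`: torsion-free and compatible with `D^S`,
i.e. `⟨D_X Y, V⟩ = □_X Y(V)` for `V ∈ Γ(S)` -/
def Admissible (D : XS → XS → XS) : Prop :=
  d.IsConn D ∧ d.TorsionFree D ∧
    ∀ X Y (V : XS), d.scr V →
      d.gS (d.iota (D X Y)) (d.iota V) = d.sq X (d.iota Y) (d.iota V)

/-- curvature of a connection on `Σ` -/
def curv (D : XS → XS → XS) (X Y Z : XS) : XS :=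
  D X (D Y Z) - D Y (D X Z) - D (d.bra X Y) Z

/-- `det [(ν(A),ν(B)),(ρ(A),ρ(B))]` -/
def detNP (A B : XA) : CS := d.nu A * d.rho B - d.nu B * d.rho A

/-- the matrix `[(ν(A),ν(B)),(ρ(A),ρ(B))]` vanishes -/
def matZero (A B : XA) : Prop := d.nu A = 0 ∧ d.nu B = 0 ∧ d.rho A = 0 ∧ d.rho B = 0

/-- `Υ` restricted to `Σ`: `Υ(A,B,C,D) = II(A,C)II(B,D) - II(A,D)II(B,C)` -/
def UpsS (A B C E : XA) : CS := d.II A C * d.II B E - d.II A E * d.II B C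

/-- `∇_{𝒜°}ℬ°` has a good limit on `Σ`: there is a vectorfield `𝒟` on `M`
with `⟨𝒟,·⟩ = □_𝒜 ℬ(·)` (off `Σ` this says `𝒟 = ∇_𝒜 ℬ`) -/
def nablaGood (A B : XM) : Prop := ∃ D : XM, ∀ C, d.gM D C = d.sqM A B C

/-- `∇_A B` is well-defined for `A, B ∈ X_Σ`: the limit exists for all
extensions and its restriction to `Σ` depends only on `A`, `B` -/
def nablaWD (A B : XA) : Prop :=
  (∀ A' B' : XM, d.rV A' = A → d.rV B' = B → d.nablaGood A' B') ∧
  (∀ (A₁ B₁ A₂ B₂ D₁ D₂ : XM), d.rV A₁ = A → d.rV B₁ = B → d.rV A₂ = A → d.rV B₂ = B →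
    (∀ C, d.gM D₁ C = d.sqM A₁ B₁ C) → (∀ C, d.gM D₂ C = d.sqM A₂ B₂ C) →
    d.rV D₁ = d.rV D₂)

/-- Gram determinant `det (g_{A∧B})` on `M` -/
def gramM (A B : XM) : CM := d.gM A A * d.gM B B - d.gM A B * d.gM A B

/-- Gram determinant `det (g_{A∧B})` along `Σ` -/
def gramS (A B : XA) : CS := d.gS A A * d.gS B B - d.gS A B * d.gS A B

/-- `⟨R(A,B)C,E⟩` is well-defined for `A,B,C,E ∈ X_Σ`: the limit
`τ⁻¹ Υ(𝒜,ℬ,𝒞,ℰ)` exists for all extensions and its restriction to `Σ`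
depends only on `A,B,C,E` -/
def curvWD (A B C E : XA) : Prop :=
  (∀ A' B' C' E' : XM, d.rV A' = A → d.rV B' = B → d.rV C' = C → d.rV E' = E →
    ∃ k, d.Ups A' B' C' E' = k * d.tau) ∧
  (∀ (A₁ B₁ C₁ E₁ A₂ B₂ C₂ E₂ : XM) (k₁ k₂ : CM),
    d.rV A₁ = A → d.rV B₁ = B → d.rV C₁ = C → d.rV E₁ = E →
    d.rV A₂ = A → d.rV B₂ = B → d.rV C₂ = C → d.rV E₂ = E →
    d.Ups A₁ B₁ C₁ E₁ = k₁ * d.tau → d.Ups A₂ B₂ C₂ E₂ = k₂ * d.tau →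
    d.rF k₁ = d.rF k₂)

/-- `⟨R(A,B)A,B⟩` is well-defined and vanishes -/
def curvWD0 (A B : XA) : Prop :=
  d.curvWD A B A B ∧
  ∀ (A' B' : XM) (k : CM), d.rV A' = A → d.rV B' = B →
    d.Ups A' B' A' B' = k * d.tau → d.rF k = 0

/-- `K_{A∧B}` is well-defined (case `rank (g_{A∧B}) = 2`) -/
def secWD (A B : XA) : Prop :=
  (∀ A' B' : XM, d.rV A' = A → d.rV B' = B → IsUnit (d.gramM A' B') →
    ∃ k, d.Ups A' B' A' B' = k * d.tau) ∧
  (∀ (A₁ B₁ A₂ B₂ : XM) (k₁ k₂ : CM),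
    d.rV A₁ = A → d.rV B₁ = B → d.rV A₂ = A → d.rV B₂ = B →
    IsUnit (d.gramM A₁ B₁) → IsUnit (d.gramM A₂ B₂) →
    d.Ups A₁ B₁ A₁ B₁ = k₁ * d.tau → d.Ups A₂ B₂ A₂ B₂ = k₂ * d.tau →
    d.rF k₁ = d.rF k₂)

/-- `rank (g_{A∧B}) = 1` and `R ∈ A∧B` -/
def rank1R (A B : XA) : Prop :=
  d.gramS A B = 0 ∧
  (∀ p : Pt, ¬(d.evF p (d.gS A A) = 0 ∧ d.evF p (d.gS A B) = 0 ∧ d.evF p (d.gS B B) = 0)) ∧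
  ∃ f h : CS, d.iota d.R = f • A + h • B

/-- `K_{A∧B}` is well-defined (case `rank (g_{A∧B}) = 1`, `R ∈ A∧B`):
here `K = (τ⁻¹⟨R(𝒜,ℬ)𝒜,ℬ⟩)/(τ⁻¹ det g_{𝒜∧ℬ}) = (τ⁻²Υ)/k`; the limit must
exist for all extensions and the value (here compared cross-multiplied,
`j₁/k₁ = j₂/k₂`) must depend only on `A,B` -/
def secWD1 (A B : XA) : Prop :=
  (∀ A' B' : XM, d.rV A' = A → d.rV B' = B →
    (∃ k, IsUnit k ∧ d.gramM A' B' = k * d.tau) →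
    ∃ j, d.Ups A' B' A' B' = j * d.tau * d.tau) ∧
  (∀ (A₁ B₁ A₂ B₂ : XM) (k₁ k₂ j₁ j₂ : CM),
    d.rV A₁ = A → d.rV B₁ = B → d.rV A₂ = A → d.rV B₂ = B →
    d.gramM A₁ B₁ = k₁ * d.tau → IsUnit k₁ →
    d.gramM A₂ B₂ = k₂ * d.tau → IsUnit k₂ →
    d.Ups A₁ B₁ A₁ B₁ = j₁ * d.tau * d.tau →
    d.Ups A₂ B₂ A₂ B₂ = j₂ * d.tau * d.tau →
    d.rF j₁ * d.rF k₂ = d.rF j₂ * d.rF k₁)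

/-- the tangential connection `∇^Σ_X Y = ∇_𝒳 𝒴|_Σ - ν(∇_𝒳 𝒴|_Σ)·N`,
computed with the canonical extensions `𝒳, 𝒴` -/
def IsTangConn (nab : XS → XS → XS) : Prop :=
  ∀ X Y : XS, ∃ DXY : XM,
    (∀ C, d.gM DXY C = d.sqM (d.cext (d.iota X)) (d.cext (d.iota Y)) C) ∧
    d.iota (nab X Y) = d.rV DXY - d.gS (d.rV DXY) d.N • d.N

/-- `τ²·Ric(𝒜°,ℬ°)`, computed in an adapted frame
`(E 0, …, E (m-1), E m) = (𝒩, E₁, …, ℛ)`: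
`Ric(𝒜°,ℬ°) = Σ_{i<m} τ⁻¹Υ(𝒜,Eᵢ,ℬ,Eᵢ) + τ⁻²Υ(𝒜,ℛ,ℬ,ℛ)` -/
def RicRep (m : ℕ) (E : Fin (m + 1) → XM) (A B : XM) : CM :=
  d.tau * (∑ i ∈ Finset.univ.erase (Fin.last m), d.Ups A (E i) B (E i)) +
    d.Ups A (d.cext (d.iota d.R)) B (d.cext (d.iota d.R))

/-- `Ric(𝒜°,ℬ°) ≅ 0`, i.e. the Ricci curvature extends smoothly across `Σ` -/
def RicGood (m : ℕ) (E : Fin (m + 1) → XM) (A B : XM) : Prop :=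
  ∃ k, d.RicRep m E A B = k * d.tau * d.tau

/-- `Ric(A,B)` is well-defined for `A,B ∈ X_Σ` -/
def RicWD (m : ℕ) (E : Fin (m + 1) → XM) (A B : XA) : Prop :=
  (∀ A' B' : XM, d.rV A' = A → d.rV B' = B → d.RicGood m E A' B') ∧
  (∀ (A₁ B₁ A₂ B₂ : XM) (k₁ k₂ : CM),
    d.rV A₁ = A → d.rV B₁ = B → d.rV A₂ = A → d.rV B₂ = B →
    d.RicRep m E A₁ B₁ = k₁ * d.tau * d.tau →
    d.RicRep m E A₂ B₂ = k₂ * d.tau * d.tau →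
    d.rF k₁ = d.rF k₂)

end RLData

/-!
The screen parts of `D^S_X Y - D^S_Y X` and of `[X,Y]` pair identically with every screen
field, both giving `□_X Y - □_Y X`, so by nondegeneracy of the screen metric
`D^S_X Y - D^S_Y X = [X,Y]^S`. A tangent field has no `N`-component, so
`[X,Y] = [X,Y]^S + ρ([X,Y]) R`, and the torsion of `D̃` is left with the `R`-component
`X(ρ(Y)) - Y(ρ(X)) - ρ([X,Y]) = dρ(X,Y)`.
-/

namespace RLData

variable {CS CM XS XA XM : Type} [CommRing CS] [CommRing CM]
  [AddCommGroup XS] [Module CS XS] [AddCommGroup XA] [Module CS XA]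
  [AddCommGroup XM] [Module CM XM] {Pt : Type} {Tp : Pt → Type}
  (d : RLData CS CM XS XA XM Pt Tp)

theorem sq_neg_left (X : XS) (A : XA) : d.sq (-X) A = -d.sq X A := by
  rw [← neg_one_smul CS X, d.sq_smul1]
  exact neg_one_smul CS (d.sq X A)

theorem sq_sub_left (X Y : XS) (A : XA) : d.sq (X - Y) A = d.sq X A - d.sq Y A := by
  rw [sub_eq_add_neg, d.sq_add1, d.sq_neg_left, ← sub_eq_add_neg]

theorem scr_sub {V W : XS} (hV : d.scr V) (hW : d.scr W) : d.scr (V - W) := by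
  simp only [scr, sq_sub_left, LinearMap.sub_apply] at *
  rw [hV, hW, sub_zero]

theorem eq_of_scr_of_forall_gS_eq {V W : XS} (hV : d.scr V) (hW : d.scr W)
    (h : ∀ U, d.scr U → d.gS (d.iota V) (d.iota U) = d.gS (d.iota W) (d.iota U)) :
    V = W := by
  refine sub_eq_zero.mp (d.scr_nondeg _ (d.scr_sub hV hW) fun U hU => ?_)
  rw [map_sub, map_sub, LinearMap.sub_apply, h U hU, sub_self]

theorem nu_iota (X : XS) : d.nu (d.iota X) = 0 := by
  rw [nu, d.gS_symm, d.gN_tan]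

theorem iota_decomp (X : XS) :
    d.iota X = d.iota (d.sP (d.iota X)) + d.rho (d.iota X) • d.iota d.R := by
  have h := d.decomp (d.iota X)
  rwa [← nu, nu_iota, zero_smul, zero_add] at h

theorem decomp_tangent (X : XS) : X = d.sP (d.iota X) + d.rho (d.iota X) • d.R :=
  d.iota_inj (by rw [map_add, map_smul]; exact d.iota_decomp X)

theorem gS_sP_iota (X : XS) (A : XA) :
    d.gS (d.iota (d.sP (d.iota X))) A = d.gS (d.iota X) A := by
  conv_rhs => rw [d.iota_decomp X]
  rw [map_add, map_smul, LinearMap.add_apply, LinearMap.smul_apply, d.R_rad, smul_zero,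
    add_zero]

theorem DS_sub_DS_eq_sP_bra (X Y : XS) :
    d.DS X (d.iota Y) - d.DS Y (d.iota X) = d.sP (d.iota (d.bra X Y)) := by
  refine d.eq_of_scr_of_forall_gS_eq (d.scr_sub (d.DS_scr _ _) (d.DS_scr _ _))
    (d.sP_scr _) fun V hV => ?_
  rw [map_sub, map_sub, LinearMap.sub_apply, d.DS_def _ _ _ hV, d.DS_def _ _ _ hV, d.gS_sP_iota,
    d.sq_tor]

end RLData

/-- The main connection `D̃` has torsion `R ⊗ dρ`:
`D̃_X Y - D̃_Y X - [X,Y] = dρ(X,Y)·R`. -/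
theorem stmt3
    {CS CM XS XA XM : Type} [CommRing CS] [CommRing CM]
    [AddCommGroup XS] [Module CS XS] [AddCommGroup XA] [Module CS XA]
    [AddCommGroup XM] [Module CM XM] {Pt : Type} {Tp : Pt → Type}
    (d : RLData CS CM XS XA XM Pt Tp) :
    ∀ X Y : XS, d.Dt X Y - d.Dt Y X - d.bra X Y = d.drho X Y • d.R := by
  intro X Y
  unfold RLData.Dt RLData.drho
  nth_rewrite 1 [d.decomp_tangent (d.bra X Y)]
  linear_combination (norm := module) d.DS_sub_DS_eq_sP_bra X Y
end

section
/- Let (M,g) be a transverse Riemann-Lorentz space with tangent radical and singular hypersurface Σ. Then the main connection D̃ on Σ is metric, i.e. ⟨D̃_X Y,Z⟩+⟨Y,D̃_X Z⟩=X⟨Y,Z⟩ for all X,Y,Z∈X(Σ), if and only if Σ is II-flat. -/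
section Aux

variable {CS CM XS XA XM : Type} [CommRing CS] [CommRing CM]
  [AddCommGroup XS] [Module CS XS] [AddCommGroup XA] [Module CS XA]
  [AddCommGroup XM] [Module CM XM] {Pt : Type} {Tp : Pt → Type}
  (d : RLData CS CM XS XA XM Pt Tp)

lemma RLData.act_zero (X : XS) : d.act X (0 : CS) = 0 := by
  have h := d.act_add X 0 0
  simpa using h.symm

lemma half_cancel_aux (h2 : CS) (hh : h2 + h2 = 1) (t : CS) (h : t + t = 0) : t = 0 := by
  calc t = (h2 + h2) * t := by rw [hh, one_mul]
    _ = h2 * (t + t) := by ring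
    _ = 0 := by rw [h, mul_zero]

lemma RLData.sqRR (X : XS) : d.sq X (d.iota d.R) (d.iota d.R) = 0 := by
  apply half_cancel_aux d.half d.half_add
  have h := d.sq_met X (d.iota d.R) (d.iota d.R)
  rwa [d.R_rad, d.act_zero] at h

lemma RLData.II_XR (X : XS) : d.II (d.iota X) (d.iota d.R) = 0 := by
  rw [d.II_sq]
  exact d.sqRR X

lemma RLData.tdecomp (X : XS) :
    d.iota X = d.iota (d.sP (d.iota X)) + d.rho (d.iota X) • d.iota d.R := by
  have h := d.decomp (d.iota X)
  have hn : d.gS (d.iota X) d.N = 0 := by rw [d.gS_symm]; exact d.gN_tan X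
  rwa [hn, zero_smul, zero_add] at h

lemma RLData.key (X Y Z : XS) :
    d.gS (d.iota (d.Dt X Y)) (d.iota Z) =
      d.sq X (d.iota Y) (d.iota Z) -
        d.rho (d.iota Z) * d.II (d.iota X) (d.iota Y) := by
  have h1 : d.gS (d.iota (d.Dt X Y)) (d.iota Z)
      = d.gS (d.iota (d.DS X (d.iota Y))) (d.iota Z) := by
    unfold RLData.Dt
    rw [map_add, map_smul, map_add]
    simp only [LinearMap.add_apply, LinearMap.map_smul, LinearMap.smul_apply]
    rw [d.R_rad]
    simp
  have h2 : d.gS (d.iota (d.DS X (d.iota Y))) (d.iota Z)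
      = d.sq X (d.iota Y) (d.iota (d.sP (d.iota Z))) := by
    conv_lhs => rw [d.tdecomp Z]
    rw [map_add, map_smul]
    simp only [smul_eq_mul]
    rw [d.gS_symm _ (d.iota d.R), d.R_rad, mul_zero, add_zero]
    exact d.DS_def X (d.iota Y) (d.sP (d.iota Z)) (d.sP_scr (d.iota Z))
  have h3 : d.sq X (d.iota Y) (d.iota Z)
      = d.sq X (d.iota Y) (d.iota (d.sP (d.iota Z)))
        + d.rho (d.iota Z) * d.II (d.iota X) (d.iota Y) := by
    conv_lhs => rw [d.tdecomp Z]
    rw [map_add, map_smul]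
    simp only [smul_eq_mul]
    rw [d.II_sq]
  rw [h1, h2, h3]
  ring

lemma RLData.II_tan_zero (hf : d.IIflat) (X Y : XS) :
    d.II (d.iota X) (d.iota Y) = 0 := by
  conv_lhs => rw [d.tdecomp Y]
  rw [map_add, map_smul]
  simp only [smul_eq_mul]
  rw [d.II_XR, mul_zero, add_zero, d.II_symm]
  conv_lhs => rw [d.tdecomp X]
  rw [map_add, map_smul]
  simp only [smul_eq_mul]
  rw [d.II_XR, mul_zero, add_zero]
  exact hf _ _ (d.sP_scr _) (d.sP_scr _)

end Aux

/-- The main connection `D̃` is metric if and only if `Σ` is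
`II`-flat. -/
theorem stmt4
    {CS CM XS XA XM : Type} [CommRing CS] [CommRing CM]
    [AddCommGroup XS] [Module CS XS] [AddCommGroup XA] [Module CS XA]
    [AddCommGroup XM] [Module CM XM] {Pt : Type} {Tp : Pt → Type}
    (d : RLData CS CM XS XA XM Pt Tp) :
    (∀ X Y Z : XS,
      d.gS (d.iota (d.Dt X Y)) (d.iota Z) + d.gS (d.iota Y) (d.iota (d.Dt X Z)) =
        d.act X (d.gS (d.iota Y) (d.iota Z))) ↔ d.IIflat := by
  constructor
  · intro hm V W hV hW
    have h := hm V W d.R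
    rw [d.gS_symm (d.iota W), d.key, d.key] at h
    have hmet := d.sq_met V (d.iota W) (d.iota d.R)
    have hgWR : d.gS (d.iota W) (d.iota d.R) = 0 := by
      rw [d.gS_symm]; exact d.R_rad _
    rw [hgWR] at h hmet
    have hz : d.rho (d.iota d.R) * d.II (d.iota V) (d.iota W)
        + d.rho (d.iota W) * d.II (d.iota V) (d.iota d.R) = 0 := by
      linear_combination hmet - h
    rw [d.II_XR, mul_zero, add_zero, d.rho_tan, d.HRR] at hz
    simpa using hz
  · intro hf X Y Z
    rw [d.gS_symm (d.iota Y), d.key, d.key, d.II_tan_zero hf, d.II_tan_zero hf]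
    have hmet := d.sq_met X (d.iota Y) (d.iota Z)
    rw [d.gS_symm (d.iota Y) (d.iota Z)] at hmet ⊢
    linear_combination hmet
end

section
/- Let (M,g) be a transverse Riemann-Lorentz space with tangent radical and singular hypersurface Σ. Then any admissible connection D on Σ satisfies D_X Y = Ḋ_X Y + σ(X,Y)·R for all X,Y∈X(Σ), where Ḋ is the main admissible connection and σ is some symmetric (0,2)-tensorfield on Σ. -/
namespace RLData

variable {CS CM XS XA XM : Type} [CommRing CS] [CommRing CM]
  [AddCommGroup XS] [Module CS XS] [AddCommGroup XA] [Module CS XA]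
  [AddCommGroup XM] [Module CM XM] {Pt : Type} {Tp : Pt → Type}
  (d : RLData CS CM XS XA XM Pt Tp)

lemma sq_apply_add1 (X X' : XS) (A C : XA) :
    d.sq (X + X') A C = d.sq X A C + d.sq X' A C := by
  rw [d.sq_add1]; simp

lemma sq_apply_smul1 (f : CS) (X : XS) (A C : XA) :
    d.sq (f • X) A C = f * d.sq X A C := by
  rw [d.sq_smul1]; simp

lemma act_add1 (X X' : XS) (f : CS) :
    d.act (X + X') f = d.act X f + d.act X' f := by
  have h1 := d.sq_apply_add1 X X' (f • d.N) d.N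
  have h2 := d.sq_apply_add1 X X' d.N d.N
  rw [d.sq_leib, d.sq_leib, d.sq_leib, d.gNN] at h1
  linear_combination h1 - f * h2

lemma sq_apply_sub1 (X X' : XS) (A C : XA) :
    d.sq (X - X') A C = d.sq X A C - d.sq X' A C := by
  have h : X - X' = X + (-1 : CS) • X' := by module
  rw [h, d.sq_apply_add1, d.sq_apply_smul1]; ring

lemma scr_unique (s s' : XS) (hs : d.scr s) (hs' : d.scr s')
    (h : ∀ V : XS, d.scr V →
      d.gS (d.iota s) (d.iota V) = d.gS (d.iota s') (d.iota V)) : s = s' := by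
  have h0 : s - s' = 0 := by
    refine d.scr_nondeg _ ?_ ?_
    · rw [d.sq_apply_sub1]
      rw [show d.sq s (d.iota d.R) d.N = 0 from hs,
        show d.sq s' (d.iota d.R) d.N = 0 from hs']
      ring
    · intro V hV
      have := h V hV
      simp only [map_sub, LinearMap.sub_apply]
      rw [this]; ring
  have := sub_eq_zero.mp h0
  exact this

/-- the σ-candidate for an admissible connection `D` -/
def sigf (D : XS → XS → XS) (X Y : XS) : CS :=
  d.rho (d.iota (D X Y)) - d.act X (d.rho (d.iota Y)) + d.half * d.drho X Y

end RLData

/-- Any admissible connection `D` on `Σ` satisfies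
`D_X Y = Ḋ_X Y + σ(X,Y)·R` for some symmetric `(0,2)`-tensorfield `σ` on `Σ`,
where `Ḋ` is the main admissible connection. -/
theorem stmt5
    {CS CM XS XA XM : Type} [CommRing CS] [CommRing CM]
    [AddCommGroup XS] [Module CS XS] [AddCommGroup XA] [Module CS XA]
    [AddCommGroup XM] [Module CM XM] {Pt : Type} {Tp : Pt → Type}
    (d : RLData CS CM XS XA XM Pt Tp) :
    ∀ D : XS → XS → XS, d.Admissible D →
      ∃ σ : XS →ₗ[CS] XS →ₗ[CS] CS,
        (∀ X Y, σ X Y = σ Y X) ∧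
        ∀ X Y, D X Y = d.Dd X Y + σ X Y • d.R := by
  intro D hD
  obtain ⟨⟨hsm1, hadd1, hadd2, hleib⟩, htor, hcomp⟩ := hD
  have hbra : ∀ X Y, d.bra X Y = D X Y - D Y X := fun X Y => (htor X Y).symm
  -- bracket linearity facts, derived from `D`
  have hbra_add1 : ∀ X X' Y, d.bra (X + X') Y = d.bra X Y + d.bra X' Y := by
    intro X X' Y; rw [hbra, hbra, hbra, hadd1, hadd2]; abel
  have hbra_add2 : ∀ X Y Y', d.bra X (Y + Y') = d.bra X Y + d.bra X Y' := by
    intro X Y Y'; rw [hbra, hbra, hbra, hadd1, hadd2]; abel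
  have hbra_sm1 : ∀ (f : CS) X Y,
      d.bra (f • X) Y = f • d.bra X Y - d.act Y f • X := by
    intro f X Y; rw [hbra, hbra, hsm1, hleib]; module
  have hbra_sm2 : ∀ (f : CS) X Y,
      d.bra X (f • Y) = f • d.bra X Y + d.act X f • Y := by
    intro f X Y; rw [hbra, hbra, hsm1, hleib]; module
  have hbra_anti : ∀ X Y, d.bra Y X = -d.bra X Y := by
    intro X Y; rw [hbra, hbra]; abel
  -- the screen part of `D X Y` is `D^S_X (ι Y)`
  have hDscr : ∀ X Y, d.sP (d.iota (D X Y)) = d.DS X (d.iota Y) := by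
    intro X Y
    refine d.scr_unique _ _ (d.sP_scr _) (d.DS_scr X (d.iota Y)) ?_
    intro V hV
    have hd := congrArg (fun A => d.gS A (d.iota V)) (d.decomp (d.iota (D X Y)))
    simp only [map_add, map_smul, LinearMap.add_apply, LinearMap.smul_apply,
      smul_eq_mul] at hd
    rw [d.gN_tan V] at hd
    rw [d.R_rad (d.iota V)] at hd
    rw [d.DS_def X (d.iota Y) V hV, ← hcomp X Y V hV]
    linear_combination -hd
  -- decomposition of tangent fields
  have hXdec : ∀ X : XS, X = d.sP (d.iota X) + d.rho (d.iota X) • d.R := by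
    intro X
    apply d.iota_inj
    have hd := d.decomp (d.iota X)
    have h0 : d.gS (d.iota X) d.N = 0 := by rw [d.gS_symm]; exact d.gN_tan X
    rw [h0, zero_smul, zero_add] at hd
    rw [map_add, map_smul]
    exact hd
  have hrep : ∀ X Y, D X Y = d.DS X (d.iota Y) + d.rho (d.iota (D X Y)) • d.R := by
    intro X Y
    conv_lhs => rw [hXdec (D X Y)]
    rw [hDscr]
  have hdrho : ∀ X Y, d.drho X Y =
      d.act X (d.rho (d.iota Y)) - d.act Y (d.rho (d.iota X)) -
        d.rho (d.iota (d.bra X Y)) := fun _ _ => rfl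
  -- bilinearity of sigf
  have H1 : ∀ X X' Y, d.sigf D (X + X') Y = d.sigf D X Y + d.sigf D X' Y := by
    intro X X' Y
    simp only [RLData.sigf, hdrho, hadd1, hbra_add1, map_add, d.act_add1, d.act_add]
    ring
  have H2 : ∀ (f : CS) X Y, d.sigf D (f • X) Y = f • d.sigf D X Y := by
    intro f X Y
    simp only [RLData.sigf, hdrho, hsm1, hbra_sm1, map_sub, map_smul,
      smul_eq_mul, d.act_smul, d.act_mul]
    ring
  have H3 : ∀ X Y Y', d.sigf D X (Y + Y') = d.sigf D X Y + d.sigf D X Y' := by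
    intro X Y Y'
    simp only [RLData.sigf, hdrho, hadd2, hbra_add2, map_add, d.act_add1, d.act_add]
    ring
  have H4 : ∀ (f : CS) X Y, d.sigf D X (f • Y) = f • d.sigf D X Y := by
    intro f X Y
    simp only [RLData.sigf, hdrho, hleib, hbra_sm2, map_add, map_smul,
      smul_eq_mul, d.act_mul, d.act_smul]
    ring
  refine ⟨LinearMap.mk₂ CS (d.sigf D)
      (fun X X' Y => H1 X X' Y) (fun f X Y => H2 f X Y)
      (fun X Y Y' => H3 X Y Y') (fun f X Y => H4 f X Y), ?_, ?_⟩
  · -- symmetry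
    intro X Y
    simp only [LinearMap.mk₂_apply, RLData.sigf, hdrho]
    have hpq : d.rho (d.iota (D X Y)) - d.rho (d.iota (D Y X)) =
        d.rho (d.iota (d.bra X Y)) := by
      rw [hbra]; simp only [map_sub]
    have hba : d.rho (d.iota (d.bra Y X)) = -d.rho (d.iota (d.bra X Y)) := by
      rw [hbra_anti]; simp only [map_neg]
    linear_combination hpq + (d.act X (d.rho (d.iota Y)) -
      d.act Y (d.rho (d.iota X)) - d.rho (d.iota (d.bra X Y))) * d.half_add +
      d.half * hba
  · -- the representation formula
    intro X Y
    rw [hrep X Y]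
    simp only [LinearMap.mk₂_apply, RLData.Dd, RLData.Dt, RLData.sigf]
    module
end

section
/- Let (M,g) be a transverse Riemann-Lorentz space with tangent radical and singular hypersurface Σ. If there exists a torsion-free metric connection on Σ, then: (1) it is admissible; (2) every admissible connection on Σ is metric; and (3) Σ is II-flat. -/
/-- If there exists a torsion-free metric connection on `Σ`,
then (1) it is admissible, (2) every admissible connection on `Σ` is metric, and
(3) `Σ` is `II`-flat. -/
theorem stmt6
    {CS CM XS XA XM : Type} [CommRing CS] [CommRing CM]
    [AddCommGroup XS] [Module CS XS] [AddCommGroup XA] [Module CS XA]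
    [AddCommGroup XM] [Module CM XM] {Pt : Type} {Tp : Pt → Type}
    (d : RLData CS CM XS XA XM Pt Tp) :
    ∀ D : XS → XS → XS, d.IsConn D → d.TorsionFree D → d.MetricConn D →
      d.Admissible D ∧ (∀ D' : XS → XS → XS, d.Admissible D' → d.MetricConn D') ∧
        d.IIflat := by
  intro D hc ht hm
  -- D-side torsion, expressed via gS
  have tD : ∀ X Y Z : XS, d.gS (d.iota (D X Y)) (d.iota Z)
      - d.gS (d.iota (D Y X)) (d.iota Z) = d.gS (d.iota (d.bra X Y)) (d.iota Z) := by
    intro X Y Z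
    have h := congrArg (fun W => d.gS (d.iota W) (d.iota Z)) (ht X Y)
    simpa [map_sub, LinearMap.sub_apply] using h
  -- Koszul: the given connection agrees with the dual connection on tangent fields
  have key : ∀ X Y Z : XS,
      d.gS (d.iota (D X Y)) (d.iota Z) = d.sq X (d.iota Y) (d.iota Z) := by
    intro X Y Z
    set p1 := d.gS (d.iota (D X Y)) (d.iota Z) with hp1
    set s := d.sq X (d.iota Y) (d.iota Z) with hs
    have two : p1 + p1 = s + s := by
      linear_combination (hm X Y Z) - (d.gS_symm (d.iota Y) (d.iota (D X Z)))
        + (hm Y Z X) - (d.gS_symm (d.iota Z) (d.iota (D Y X)))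
        - (hm Z X Y) + (d.gS_symm (d.iota X) (d.iota (D Z Y)))
        + (tD X Y Z) - (tD X Z Y) - (tD Y Z X)
        - (d.sq_met X (d.iota Y) (d.iota Z)) - (d.sq_met Y (d.iota Z) (d.iota X))
        + (d.sq_met Z (d.iota X) (d.iota Y))
        - (d.sq_tor X Y (d.iota Z)) + (d.sq_tor X Z (d.iota Y))
        + (d.sq_tor Y Z (d.iota X))
    linear_combination d.half * two + (s - p1) * d.half_add
  -- II vanishes on all pairs of tangent fields
  have IIfl : ∀ X Y : XS, d.sq X (d.iota Y) (d.iota d.R) = 0 := by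
    intro X Y
    rw [← key X Y d.R, d.gS_symm]
    exact d.R_rad _
  -- every tangent field decomposes as a screen field plus a multiple of R
  have hz : ∀ Z : XS, ∃ (V : XS) (r : CS),
      d.scr V ∧ d.iota Z = d.iota V + r • d.iota d.R := by
    intro Z
    refine ⟨d.sP (d.iota Z), d.rho (d.iota Z), d.sP_scr _, ?_⟩
    have h0 : d.gS (d.iota Z) d.N = 0 := by
      rw [d.gS_symm]; exact d.gN_tan Z
    have hd := d.decomp (d.iota Z)
    rw [h0, zero_smul, zero_add] at hd
    exact hd
  refine ⟨⟨hc, ht, fun X Y V _ => key X Y V⟩, ?_, ?_⟩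
  · -- every admissible connection is metric
    rintro D' ⟨hc', ht', ha'⟩
    have key2 : ∀ X Y Z : XS,
        d.gS (d.iota (D' X Y)) (d.iota Z) = d.sq X (d.iota Y) (d.iota Z) := by
      intro X Y Z
      obtain ⟨V, r, hV, hZ⟩ := hz Z
      have e1 : d.gS (d.iota (D' X Y)) (d.iota d.R) = 0 := by
        rw [d.gS_symm]; exact d.R_rad _
      have e2 : d.sq X (d.iota Y) (d.iota d.R) = 0 := IIfl X Y
      rw [hZ, map_add, map_smul, map_add, map_smul, e1, e2]
      simp only [smul_zero, add_zero]
      exact ha' X Y V hV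
    intro X Y Z
    rw [key2 X Y Z, d.gS_symm (d.iota Y), key2 X Z Y]
    exact d.sq_met X (d.iota Y) (d.iota Z)
  · -- II-flatness
    intro V W _ _
    rw [d.II_sq]
    exact IIfl V W
end

section
/- Let (M,g) be a transverse Riemann-Lorentz space with tangent radical and singular hypersurface Σ. If Σ is II-flat, then all admissible connections on Σ have the same covariant curvature: for any two admissible connections D, D' and all X,Y,Z,T∈X(Σ), ⟨R^D(X,Y)Z,T⟩=⟨R^{D'}(X,Y)Z,T⟩, where R^D(X,Y)Z:=D_X(D_Y Z)−D_Y(D_X Z)−D_{[X,Y]}Z. -/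
namespace RLData

section Aux

variable {CS CM XS XA XM : Type} [CommRing CS] [CommRing CM]
  [AddCommGroup XS] [Module CS XS] [AddCommGroup XA] [Module CS XA]
  [AddCommGroup XM] [Module CM XM] {Pt : Type} {Tp : Pt → Type}
  (d : RLData CS CM XS XA XM Pt Tp)

lemma act_zero' (X : XS) : d.act X 0 = 0 := by
  have h : d.act X 0 = d.act X 0 + d.act X 0 := by
    simpa using d.act_add X 0 0
  have := left_eq_add.mp h
  exact this

include d in
lemma half_cancel' {x : CS} (h : x + x = 0) : x = 0 := by
  have h2 : d.half * (x + x) = x := by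
    rw [mul_add, ← add_mul, d.half_add, one_mul]
  rw [h, mul_zero] at h2
  exact h2.symm

lemma gR' (A : XA) : d.gS A (d.iota d.R) = 0 := by
  rw [d.gS_symm]; exact d.R_rad A

lemma nuTan' (X : XS) : d.gS (d.iota X) d.N = 0 := by
  rw [d.gS_symm]; exact d.gN_tan X

lemma sqRR' (V : XS) : d.sq V (d.iota d.R) (d.iota d.R) = 0 := by
  have h := d.sq_met V (d.iota d.R) (d.iota d.R)
  rw [d.R_rad (d.iota d.R), d.act_zero'] at h
  exact d.half_cancel' h

lemma IItan' (hflat : d.IIflat) (X V : XS) (hV : d.scr V) :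
    d.II (d.iota X) (d.iota V) = 0 := by
  have hd := d.decomp (d.iota X)
  have hIIR : d.II (d.iota d.R) (d.iota V) = 0 := by
    rw [d.II_symm, d.II_sq]
    exact d.sqRR' V
  have hIIS : d.II (d.iota (d.sP (d.iota X))) (d.iota V) = 0 :=
    hflat _ _ (d.sP_scr (d.iota X)) hV
  calc d.II (d.iota X) (d.iota V)
      = d.gS (d.iota X) d.N * d.II d.N (d.iota V)
        + d.II (d.iota (d.sP (d.iota X))) (d.iota V)
        + d.rho (d.iota X) * d.II (d.iota d.R) (d.iota V) := by
        conv_lhs => rw [hd]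
        simp [map_add, map_smul, LinearMap.add_apply, LinearMap.smul_apply,
          smul_eq_mul]
    _ = 0 := by rw [d.nuTan' X, hIIS, hIIR]; ring

lemma keyII' (hflat : d.IIflat) (X V : XS) (hV : d.scr V) :
    d.sq X (d.iota d.R) (d.iota V) = 0 := by
  have hm := d.sq_met X (d.iota d.R) (d.iota V)
  rw [d.R_rad (d.iota V), d.act_zero'] at hm
  have h2 : d.sq X (d.iota V) (d.iota d.R) = 0 := by
    rw [← d.II_sq]; exact d.IItan' hflat X V hV
  rw [h2, add_zero] at hm
  exact hm

lemma lemA' {D : XS → XS → XS} (hD : d.Admissible D) (X Y T : XS) :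
    d.gS (d.iota (D X Y)) (d.iota T) =
      d.sq X (d.iota Y) (d.iota (d.sP (d.iota T))) := by
  have hd := d.decomp (d.iota T)
  calc d.gS (d.iota (D X Y)) (d.iota T)
      = d.gS (d.iota T) d.N * d.gS (d.iota (D X Y)) d.N
        + d.gS (d.iota (D X Y)) (d.iota (d.sP (d.iota T)))
        + d.rho (d.iota T) * d.gS (d.iota (D X Y)) (d.iota d.R) := by
        conv_lhs => rw [hd]
        simp [map_add, map_smul, smul_eq_mul]
    _ = d.sq X (d.iota Y) (d.iota (d.sP (d.iota T))) := by
        rw [d.nuTan' (D X Y), d.gR' (d.iota (D X Y)),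
          hD.2.2 X Y (d.sP (d.iota T)) (d.sP_scr (d.iota T))]
        ring

lemma diff' {D D' : XS → XS → XS} (hD : d.Admissible D) (hD' : d.Admissible D')
    (X Y : XS) : ∃ c : CS,
      d.iota (D' X Y) = d.iota (D X Y) + c • d.iota d.R := by
  set A : XA := d.iota (D' X Y) - d.iota (D X Y) with hA
  have hAN : d.gS A d.N = 0 := by
    rw [hA, map_sub, LinearMap.sub_apply, d.nuTan', d.nuTan', sub_zero]
  have hAV : ∀ V : XS, d.scr V → d.gS A (d.iota V) = 0 := by
    intro V hV
    rw [hA, map_sub, LinearMap.sub_apply, hD'.2.2 X Y V hV, hD.2.2 X Y V hV,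
      sub_self]
  have hd := d.decomp A
  have hsP : d.sP A = 0 := by
    apply d.scr_nondeg (d.sP A) (d.sP_scr A)
    intro V hV
    have h2 : d.gS A (d.iota V) =
        d.gS A d.N * d.gS d.N (d.iota V)
        + d.gS (d.iota (d.sP A)) (d.iota V)
        + d.rho A * d.gS (d.iota d.R) (d.iota V) := by
      conv_lhs => rw [hd]
      simp [map_add, map_smul, smul_eq_mul]
    rw [hAV V hV, d.gN_tan V, d.R_rad (d.iota V)] at h2
    have := h2.symm
    rw [mul_zero, mul_zero, zero_add, add_zero] at this
    exact this
  refine ⟨d.rho A, ?_⟩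
  have hAeq : A = d.rho A • d.iota d.R := by
    conv_lhs => rw [hd]
    rw [hAN, hsP]
    simp
  rw [hA] at hAeq
  exact sub_eq_iff_eq_add'.mp hAeq

lemma step8' (hflat : d.IIflat) {D D' : XS → XS → XS}
    (hD : d.Admissible D) (hD' : d.Admissible D') (W Y Z V : XS)
    (hV : d.scr V) :
    d.sq W (d.iota (D' Y Z)) (d.iota V) = d.sq W (d.iota (D Y Z)) (d.iota V) := by
  obtain ⟨c, hc⟩ := d.diff' hD hD' Y Z
  rw [hc, d.sq_add2, LinearMap.add_apply, d.sq_leib,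
    d.R_rad (d.iota V), d.keyII' hflat W V hV, mul_zero, mul_zero, add_zero,
    add_zero]

end Aux

end RLData

/-- If `Σ` is `II`-flat, all admissible connections on `Σ`
have the same covariant curvature. -/
theorem stmt7
    {CS CM XS XA XM : Type} [CommRing CS] [CommRing CM]
    [AddCommGroup XS] [Module CS XS] [AddCommGroup XA] [Module CS XA]
    [AddCommGroup XM] [Module CM XM] {Pt : Type} {Tp : Pt → Type}
    (d : RLData CS CM XS XA XM Pt Tp) (hflat : d.IIflat) :
    ∀ D D' : XS → XS → XS, d.Admissible D → d.Admissible D' →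
      ∀ X Y Z T : XS,
        d.gS (d.iota (d.curv D X Y Z)) (d.iota T) =
          d.gS (d.iota (d.curv D' X Y Z)) (d.iota T) := by
  intro D D' hD hD' X Y Z T
  set V : XS := d.sP (d.iota T) with hVdef
  have hV : d.scr V := d.sP_scr (d.iota T)
  have expand : ∀ Dc : XS → XS → XS, d.Admissible Dc →
      d.gS (d.iota (d.curv Dc X Y Z)) (d.iota T) =
        d.sq X (d.iota (Dc Y Z)) (d.iota V)
        - d.sq Y (d.iota (Dc X Z)) (d.iota V)
        - d.sq (d.bra X Y) (d.iota Z) (d.iota V) := by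
    intro Dc hDc
    have hcurv : d.curv Dc X Y Z =
        Dc X (Dc Y Z) - Dc Y (Dc X Z) - Dc (d.bra X Y) Z := rfl
    rw [hcurv, map_sub, map_sub, map_sub, map_sub, LinearMap.sub_apply,
      LinearMap.sub_apply, d.lemA' hDc X (Dc Y Z) T, d.lemA' hDc Y (Dc X Z) T,
      d.lemA' hDc (d.bra X Y) Z T]
  rw [expand D hD, expand D' hD', d.step8' hflat hD hD' X Y Z V hV,
    d.step8' hflat hD hD' Y X Z V hV]
end
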